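/- arXiv:2306.16255 — 3 statements merged into one kernel-verified Lean document; each statement's English description precedes it below -/
import Mathlib

section
/- A univariate real polynomial p of even degree is nonnegative on all of ℝ if and only if it is a sum of squares of real polynomials. -/
/-!
A nonnegative real polynomial of positive degree has a quadratic divisor that is a sum of two
squares: `(X - a)²` if it has a real root `a` (which is a minimum, hence a double root), and
`(X - Re z)² + (Im z)²` for a non-real complex root `z` otherwise. The cofactor is again
nonnegative, and since sums of two squares are closed under multiplication, induction on the
degree writes every nonnegative polynomial as a sum of two squares.
-/

open Polynomial

namespace Polynomial

-- `s` vanishes only at finitely many points, so `t ≥ 0` on a dense set and hence everywhere.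
theorem eval_nonneg_of_eval_mul_nonneg {s t : ℝ[X]} (hs0 : s ≠ 0) (hs : ∀ x, 0 ≤ s.eval x)
    (hst : ∀ x, 0 ≤ (s * t).eval x) (x : ℝ) : 0 ≤ t.eval x := by
  have hclosed : IsClosed {x | 0 ≤ t.eval x} := isClosed_le continuous_const t.continuous
  have hdense : Dense {x | s.IsRoot x}ᶜ := (finite_setOfPred_isRoot hs0).countable.dense_compl ℝ
  have hsub : {x | s.IsRoot x}ᶜ ⊆ {x | 0 ≤ t.eval x} := fun x hx ↦ by
    have hpos : 0 < s.eval x := (hs x).lt_of_ne (Ne.symm hx)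
    exact nonneg_of_mul_nonneg_right (by simpa only [eval_mul] using hst x) hpos
  exact closure_minimal hsub hclosed (hdense x)

theorem sq_X_sub_C_dvd_of_eval_nonneg {p : ℝ[X]} {a : ℝ} (hp : ∀ x, 0 ≤ p.eval x)
    (ha : p.IsRoot a) : (X - C a) ^ 2 ∣ p := by
  rcases eq_or_ne p 0 with rfl | hp0
  · exact dvd_zero _
  have hmin : IsLocalMin (fun x ↦ p.eval x) a :=
    Filter.Eventually.of_forall fun x ↦ by simpa [ha.eq_zero] using hp x
  have hderiv : p.derivative.IsRoot a := by
    simpa only [Polynomial.deriv, IsRoot.def] using hmin.deriv_eq_zero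
  exact (le_rootMultiplicity_iff hp0).mp
    ((one_lt_rootMultiplicity_iff_isRoot hp0).mpr ⟨ha, hderiv⟩)

theorem exists_sq_add_sq_dvd_of_eval_nonneg {p : ℝ[X]} (hp : ∀ x, 0 ≤ p.eval x)
    (hdeg : 0 < p.natDegree) :
    ∃ u v : ℝ[X], (u ^ 2 + v ^ 2).natDegree = 2 ∧ u ^ 2 + v ^ 2 ∣ p := by
  obtain ⟨z, hz⟩ :=
    IsAlgClosed.exists_aeval_eq_zero ℂ p (natDegree_pos_iff_degree_pos.mp hdeg).ne'
  by_cases him : z.im = 0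
  · have hroot : p.IsRoot z.re := by
      rw [← Complex.re_add_im z, him, Complex.ofReal_zero, zero_mul, add_zero,
        ← Complex.coe_algebraMap, aeval_algebraMap_apply_eq_algebraMap_eval] at hz
      simpa using hz
    refine ⟨X - C z.re, 0, ?_, ?_⟩
    · simp [natDegree_pow]
    · simpa using sq_X_sub_C_dvd_of_eval_nonneg hp hroot
  · have hquad : X ^ 2 - C (2 * z.re) * X + C (‖z‖ ^ 2) = (X - C z.re) ^ 2 + C z.im ^ 2 := by
      rw [Complex.sq_norm, Complex.normSq_apply]
      simp only [map_add, map_mul, map_ofNat]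
      ring
    refine ⟨X - C z.re, C z.im, ?_, ?_⟩
    · rw [← hquad]
      compute_degree!
    · exact hquad ▸ p.quadratic_dvd_of_aeval_eq_zero_im_ne_zero hz him

theorem exists_eq_sq_add_sq_of_eval_nonneg (p : ℝ[X]) (hp : ∀ x, 0 ≤ p.eval x) :
    ∃ q r : ℝ[X], p = q ^ 2 + r ^ 2 := by
  induction hn : p.natDegree using Nat.strong_induction_on generalizing p with
  | _ n ih =>
  rcases Nat.eq_zero_or_pos n with rfl | hpos
  · obtain ⟨c, rfl⟩ := natDegree_eq_zero.mp hn
    have hc : 0 ≤ c := by simpa using hp 0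
    exact ⟨C √c, 0, by rw [← map_pow, Real.sq_sqrt hc]; ring⟩
  obtain ⟨u, v, hdeg, t, rfl⟩ := exists_sq_add_sq_dvd_of_eval_nonneg hp (hn ▸ hpos)
  have hs : ∀ x, 0 ≤ (u ^ 2 + v ^ 2).eval x := fun x ↦ by
    simp only [eval_add, eval_pow]; positivity
  have hs0 : u ^ 2 + v ^ 2 ≠ 0 := fun h ↦ by simp [h] at hdeg
  have ht0 : t ≠ 0 := by rintro rfl; simp at hn; omega
  have htdeg : t.natDegree < n := by rw [← hn, natDegree_mul hs0 ht0]; omega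
  obtain ⟨q, r, rfl⟩ := ih _ htdeg t (eval_nonneg_of_eval_mul_nonneg hs0 hs hp) rfl
  exact ⟨u * q - v * r, u * r + v * q, sq_add_sq_mul_sq_add_sq⟩

end Polynomial

theorem nonneg_iff_sos_of_even_degree_general (p : Polynomial ℝ) :
    (∀ x : ℝ, 0 ≤ p.eval x) ↔
      ∃ (n : ℕ) (q : Fin n → Polynomial ℝ), p = ∑ i, (q i) ^ 2 := by
  constructor
  · intro hp
    obtain ⟨q, r, rfl⟩ := exists_eq_sq_add_sq_of_eval_nonneg p hp
    exact ⟨2, ![q, r], by simp [Fin.sum_univ_two]⟩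
  · rintro ⟨n, q, rfl⟩ x
    simp only [eval_finsetSum, eval_pow]
    exact Finset.sum_nonneg fun i _ ↦ sq_nonneg _

theorem nonneg_iff_sos_of_even_degree (p : Polynomial ℝ) (hdeg : Even p.natDegree) :
    (∀ x : ℝ, 0 ≤ p.eval x) ↔
      ∃ (n : ℕ) (q : Fin n → Polynomial ℝ), p = ∑ i, (q i) ^ 2 :=
  nonneg_iff_sos_of_even_degree_general p
end

section
/- The Motzkin polynomial 1 + x₁²x₂⁴ + x₁⁴x₂² − 3x₁²x₂² is not a sum of squares of real polynomials. -/
/-!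
Suppose `M = ∑ qᵢ²`. For any integer weight vector `w`, let `d` be the largest `w`-weight of a
monomial occurring in some `qᵢ`. The weight-`2d` part of `∑ qᵢ²` is `∑ hᵢ²`, where `hᵢ` is the
weight-`d` part of `qᵢ`, and it cannot vanish because a real sum of squares of polynomials is zero
only if every term is. Hence every monomial of every `qᵢ` lies in half the Newton polytope of `M`,
the triangle with vertices `(0,0), (1,2), (2,1)`. Inside that triangle `(2,2)` splits as a sum of two
lattice points only as `(1,1) + (1,1)`, so the coefficient of `x₁²x₂²` in `∑ qᵢ²` is
`∑ coeff_{(1,1)}(qᵢ)² ≥ 0`, whereas in `M` it is `-3`.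
-/

open MvPolynomial

namespace MvPolynomial

variable {σ ι R : Type*}

theorem eq_zero_of_sum_sq_eq_zero [Field R] [LinearOrder R] [IsStrictOrderedRing R]
    {s : Finset ι} {q : ι → MvPolynomial σ R} (h : ∑ i ∈ s, q i ^ 2 = 0) {i : ι} (hi : i ∈ s) :
    q i = 0 := by
  refine MvPolynomial.funext fun x => ?_
  have hx : ∑ j ∈ s, eval x (q j) ^ 2 = 0 := by simpa using congrArg (eval x) h
  simpa using (Finset.sum_eq_zero_iff_of_nonneg fun j _ => sq_nonneg _).mp hx i hi

theorem coeff_sq_eq_sq_coeff [CommSemiring R] (q : MvPolynomial σ R) {h m : σ →₀ ℕ}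
    (hm : h + h = m) (huniq : ∀ a ∈ q.support, ∀ b ∈ q.support, a + b = m → a = h) :
    coeff m (q ^ 2) = coeff h q ^ 2 := by
  classical
  rw [sq, coeff_mul, Finset.sum_eq_single (h, h) _ (fun hh => absurd (by simpa using hm) hh), sq]
  rintro ⟨a, b⟩ hab hne
  simp only [Finset.HasAntidiagonal.mem_antidiagonal] at hab
  by_cases ha : coeff a q = 0
  · simp [ha]
  by_cases hb : coeff b q = 0
  · simp [hb]
  have hah : a = h := huniq a (mem_support_iff.2 ha) b (mem_support_iff.2 hb) hab
  subst hah
  exact absurd (by rw [add_left_cancel (hab.trans hm.symm)]) hne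

theorem coeff_sq_eq_coeff_sq_weightedHomogeneousComponent [CommSemiring R] (w : σ → ℤ)
    {q : MvPolynomial σ R} {d : ℤ} (hq : ∀ u ∈ q.support, Finsupp.weight w u ≤ d)
    {m : σ →₀ ℕ} (hm : Finsupp.weight w m = 2 * d) :
    coeff m (q ^ 2) = coeff m (weightedHomogeneousComponent w d q ^ 2) := by
  classical
  rw [sq, sq, coeff_mul, coeff_mul]
  refine Finset.sum_congr rfl fun ⟨a, b⟩ hab => ?_
  have hw : Finsupp.weight w a + Finsupp.weight w b = 2 * d := by
    rw [← map_add, Finset.HasAntidiagonal.mem_antidiagonal.1 hab, hm]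
  simp only [coeff_weightedHomogeneousComponent]
  by_cases ha : coeff a q = 0
  · simp [ha]
  by_cases hb : coeff b q = 0
  · simp [hb]
  have := hq a (mem_support_iff.2 ha)
  have := hq b (mem_support_iff.2 hb)
  rw [if_pos (by omega), if_pos (by omega)]

theorem weight_le_of_sum_sq [Field R] [LinearOrder R] [IsStrictOrderedRing R] (w : σ → ℤ)
    {s : Finset ι} {q : ι → MvPolynomial σ R} {c : ℤ}
    (hP : ∀ m ∈ (∑ i ∈ s, q i ^ 2).support, Finsupp.weight w m ≤ 2 * c)
    {i : ι} (hi : i ∈ s) {u : σ →₀ ℕ} (hu : u ∈ (q i).support) : Finsupp.weight w u ≤ c := by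
  classical
  set S := s.biUnion fun j => (q j).support
  have hS : S.Nonempty := ⟨u, Finset.mem_biUnion.2 ⟨i, hi, hu⟩⟩
  set d := S.sup' hS (Finsupp.weight w)
  have hd : ∀ j ∈ s, ∀ v ∈ (q j).support, Finsupp.weight w v ≤ d := fun j hj v hv =>
    S.le_sup' _ (Finset.mem_biUnion.2 ⟨j, hj, hv⟩)
  by_contra! hcu
  have hcd : c < d := hcu.trans_le (hd i hi u hu)
  set top := fun j => weightedHomogeneousComponent w d (q j)
  have htop : ∑ j ∈ s, top j ^ 2 = 0 := by
    ext m
    rw [coeff_sum, coeff_zero]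
    by_cases hm : Finsupp.weight w m = 2 * d
    · rw [← Finset.sum_congr rfl fun j hj =>
        coeff_sq_eq_coeff_sq_weightedHomogeneousComponent w (hd j hj) hm, ← coeff_sum]
      exact notMem_support_iff.1 fun hmP => by linarith [hP m hmP]
    · refine Finset.sum_eq_zero fun j _ => ?_
      exact ((weightedHomogeneousComponent_isWeightedHomogeneous d (q j)).pow 2).coeff_eq_zero m
        (by rwa [two_nsmul, ← two_mul])
  obtain ⟨v, hvS, hvd⟩ := S.exists_mem_eq_sup' hS (Finsupp.weight w)
  obtain ⟨j, hj, hv⟩ := Finset.mem_biUnion.1 hvS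
  have : coeff v (top j) = coeff v (q j) := by
    simp [top, coeff_weightedHomogeneousComponent, ← hvd, d]
  rw [eq_zero_of_sum_sq_eq_zero htop hj, coeff_zero] at this
  exact mem_support_iff.1 hv this.symm

end MvPolynomial

noncomputable def motzkin : MvPolynomial (Fin 2) ℝ :=
  1 + X 0 ^ 2 * X 1 ^ 4 + X 0 ^ 4 * X 1 ^ 2 - 3 * X 0 ^ 2 * X 1 ^ 2

theorem motzkin_eq_sum_monomial : motzkin = 1
    + monomial (Finsupp.single 0 2 + Finsupp.single 1 4) 1
    + monomial (Finsupp.single 0 4 + Finsupp.single 1 2) 1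
    - monomial (Finsupp.single 0 2 + Finsupp.single 1 2) 3 := by
  rw [motzkin, ← map_ofNat C 3]
  simp only [X_pow_eq_monomial, C_mul_monomial, monomial_mul, mul_one]

theorem mem_support_motzkin {m : Fin 2 →₀ ℕ} (hm : m ∈ motzkin.support) :
    m = 0 ∨ m = Finsupp.single 0 2 + Finsupp.single 1 4 ∨
      m = Finsupp.single 0 4 + Finsupp.single 1 2 ∨ m = Finsupp.single 0 2 + Finsupp.single 1 2 := by
  classical
  contrapose! hm
  rw [notMem_support_iff, motzkin_eq_sum_monomial]
  simp [coeff_monomial, coeff_one, Ne.symm hm.1, hm.2.1.symm, hm.2.2.1.symm, hm.2.2.2.symm]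

theorem coeff_motzkin : coeff (Finsupp.single 0 2 + Finsupp.single 1 2) motzkin = -3 := by
  classical
  rw [motzkin_eq_sum_monomial]
  simp [coeff_monomial, coeff_one, Finsupp.ext_iff, Fin.forall_fin_two]

/-- Lattice points of `½ · conv {(0,0), (2,4), (4,2)}`, half the Newton polytope of `motzkin`. -/
def motzkinHalfNewton : Set (Fin 2 →₀ ℕ) := {u | u 0 + u 1 ≤ 3 ∧ u 0 ≤ 2 * u 1 ∧ u 1 ≤ 2 * u 0}

theorem mem_motzkinHalfNewton_of_eq_sum_sq {ι : Type*} {s : Finset ι}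
    {q : ι → MvPolynomial (Fin 2) ℝ} (h : motzkin = ∑ i ∈ s, q i ^ 2) {i : ι} (hi : i ∈ s)
    {u : Fin 2 →₀ ℕ} (hu : u ∈ (q i).support) : u ∈ motzkinHalfNewton := by
  have hweight : ∀ (w : Fin 2 → ℤ) (c : ℤ), 0 ≤ c → 2 * w 0 + 4 * w 1 ≤ 2 * c →
      4 * w 0 + 2 * w 1 ≤ 2 * c → 2 * w 0 + 2 * w 1 ≤ 2 * c → u 0 * w 0 + u 1 * w 1 ≤ c := by
    intro w c h00 h24 h42 h22
    have := weight_le_of_sum_sq w (c := c) (fun m hm => ?_) hi hu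
    · simpa [Finsupp.weight_apply, Finsupp.sum_fintype] using this
    rw [← h] at hm
    rcases mem_support_motzkin hm with rfl | rfl | rfl | rfl <;>
      simp only [map_zero, map_add, Finsupp.weight_single, nsmul_eq_mul, Nat.cast_ofNat] <;>
      linarith
  have hdeg := hweight (fun _ => 1) 3 (by norm_num) (by norm_num) (by norm_num) (by norm_num)
  have hx := hweight ![1, -2] 0 le_rfl (by norm_num) (by norm_num) (by norm_num)
  have hy := hweight ![-2, 1] 0 le_rfl (by norm_num) (by norm_num) (by norm_num)
  simp only [Matrix.cons_val_zero, Matrix.cons_val_one] at hx hy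
  refine ⟨?_, ?_, ?_⟩ <;> omega

theorem eq_of_add_eq_of_mem_motzkinHalfNewton {a b : Fin 2 →₀ ℕ} (ha : a ∈ motzkinHalfNewton)
    (hb : b ∈ motzkinHalfNewton) (hab : a + b = Finsupp.single 0 2 + Finsupp.single 1 2) :
    a = Finsupp.single 0 1 + Finsupp.single 1 1 := by
  have h0 : a 0 + b 0 = 2 := by simpa using DFunLike.congr_fun hab 0
  have h1 : a 1 + b 1 = 2 := by simpa using DFunLike.congr_fun hab 1
  obtain ⟨ha, ha0, ha1⟩ := ha
  obtain ⟨hb, hb0, hb1⟩ := hb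
  ext j
  fin_cases j
  · simpa using (by omega : a 0 = 1)
  · simpa using (by omega : a 1 = 1)

open MvPolynomial in
theorem motzkin_not_sos :
    ¬ ∃ (n : ℕ) (q : Fin n → MvPolynomial (Fin 2) ℝ),
        (1 + X 0 ^ 2 * X 1 ^ 4 + X 0 ^ 4 * X 1 ^ 2 - 3 * X 0 ^ 2 * X 1 ^ 2
          : MvPolynomial (Fin 2) ℝ) = ∑ i, (q i) ^ 2 := by
  rintro ⟨n, q, h⟩
  change motzkin = _ at h
  have hsq : ∀ i, coeff (Finsupp.single 0 2 + Finsupp.single 1 2) (q i ^ 2) =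
      coeff (Finsupp.single 0 1 + Finsupp.single 1 1) (q i) ^ 2 := fun i =>
    coeff_sq_eq_sq_coeff _ (by ext j; fin_cases j <;> simp) fun a ha b hb =>
      eq_of_add_eq_of_mem_motzkinHalfNewton
        (mem_motzkinHalfNewton_of_eq_sum_sq h (Finset.mem_univ i) ha)
        (mem_motzkinHalfNewton_of_eq_sum_sq h (Finset.mem_univ i) hb)
  have hcoeff : ∑ i, coeff (Finsupp.single 0 1 + Finsupp.single 1 1) (q i) ^ 2 = -3 := by
    rw [← coeff_motzkin, h, coeff_sum]
    simp only [hsq]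
  linarith [Finset.sum_nonneg fun i (_ : i ∈ Finset.univ) =>
    sq_nonneg (coeff (Finsupp.single 0 1 + Finsupp.single 1 1) (q i))]
end

section
/- For all t ∈ [−1,1), the inequality (2/π)·arccos(t) ≥ α·(1 − t) holds with α = min over z ∈ [−1,1] of (2/π)·arccos(z)/(1−z); moreover α > 0.87. -/
/-!
Put `θ = arccos z ∈ [0, π]`. The bound `arccos z ≥ 1.367 (1 - z)` reads `1.367 (1 - cos θ) ≤ θ`,
and with `θ = 2u` and `1 - cos 2u = 2 sin² u` it becomes `1.367 sin² u ≤ u`. This is trivial for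
`u ≤ 1/1.367` (as `sin u ≤ u`) and for `u ≥ 1.367` (as `sin² u ≤ 1`); in between, the Taylor bound
`sin u ≤ u - u³/6 + u⁵/120` reduces it to a polynomial inequality. Hence every quotient in the
infimum is at least `(2/π) · 1.367 > 0.87`.
-/

open Real Set

theorem le_of_hasDerivAt_le_of_nonneg {f f' g g' : ℝ → ℝ}
    (hf : ∀ x, HasDerivAt f (f' x) x) (hg : ∀ x, HasDerivAt g (g' x) x) (h₀ : f 0 ≤ g 0)
    (hderiv : ∀ x, 0 ≤ x → f' x ≤ g' x) {x : ℝ} (hx : 0 ≤ x) : f x ≤ g x :=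
  image_le_of_deriv_right_le_deriv_boundary
    (fun y _ ↦ (hf y).continuousAt.continuousWithinAt) (fun y _ ↦ (hf y).hasDerivWithinAt) h₀
    (fun y _ ↦ (hg y).continuousAt.continuousWithinAt) (fun y _ ↦ (hg y).hasDerivWithinAt)
    (fun y hy ↦ hderiv y hy.1) ⟨hx, le_rfl⟩

theorem quintic_sq_le_linear {u : ℝ} (hu₀ : 1000 / 1367 ≤ u) (hu₁ : u ≤ 1367 / 1000) :
    1367 * (u - u ^ 3 / 6 + u ^ 5 / 120) ^ 2 ≤ 1000 * u := by
  -- `sin² u / u` is maximal near `u = 1.1656`, where this inequality is tightest.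
  nlinarith [sq_nonneg (u - 1.1656), sq_nonneg (u ^ 2 - 1.3585),
    mul_nonneg (sub_nonneg.2 hu₀) (sub_nonneg.2 hu₁),
    sq_nonneg (u * (u - 1.1656)), sq_nonneg (u ^ 2 * (u - 1.1656)),
    sq_nonneg (u ^ 3 * (u - 1.1656)),
    mul_nonneg (mul_nonneg (sub_nonneg.2 hu₀) (sub_nonneg.2 hu₁)) (sq_nonneg (u - 1.1656))]

namespace Real

theorem cos_le_one_sub_sq_div_two_add_pow_four_div {x : ℝ} (hx : 0 ≤ x) :
    cos x ≤ 1 - x ^ 2 / 2 + x ^ 4 / 24 := by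
  refine le_of_hasDerivAt_le_of_nonneg (f' := fun x ↦ -sin x)
    (g := fun x ↦ 1 - x ^ 2 / 2 + x ^ 4 / 24) (g' := fun x ↦ -x + x ^ 3 / 6) hasDerivAt_cos
    (fun y ↦ ?_) (by simp) (fun y hy ↦ ?_) hx
  · exact (((hasDerivAt_const y 1).sub ((hasDerivAt_pow 2 y).div_const 2)).add
      ((hasDerivAt_pow 4 y).div_const 24)).congr_deriv (by ring)
  · linarith [sin_ge_sub_cube hy]

theorem sin_le_sub_cube_add_pow_five_div {x : ℝ} (hx : 0 ≤ x) :
    sin x ≤ x - x ^ 3 / 6 + x ^ 5 / 120 := by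
  refine le_of_hasDerivAt_le_of_nonneg (g := fun x ↦ x - x ^ 3 / 6 + x ^ 5 / 120)
    hasDerivAt_sin (fun y ↦ ?_) (by simp)
    (fun y hy ↦ cos_le_one_sub_sq_div_two_add_pow_four_div hy) hx
  exact (((hasDerivAt_id' y).sub ((hasDerivAt_pow 3 y).div_const 6)).add
    ((hasDerivAt_pow 5 y).div_const 120)).congr_deriv (by ring)

theorem sin_sq_le_linear {u : ℝ} (hu : 0 ≤ u) : 1367 * sin u ^ 2 ≤ 1000 * u := by
  rcases le_or_gt (1367 / 1000) u with hu_large | hu_small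
  · nlinarith [sin_sq_le_one u]
  have hsin : 0 ≤ sin u := sin_nonneg_of_nonneg_of_le_pi hu (by linarith [pi_gt_three])
  rcases le_or_gt u (1000 / 1367) with hu_small' | hu_mid
  · nlinarith [sin_le hu]
  calc 1367 * sin u ^ 2 ≤ 1367 * (u - u ^ 3 / 6 + u ^ 5 / 120) ^ 2 := by
        gcongr; exact sin_le_sub_cube_add_pow_five_div hu
    _ ≤ 1000 * u := quintic_sq_le_linear hu_mid.le hu_small.le

theorem one_sub_cos_le_linear {θ : ℝ} (hθ : 0 ≤ θ) : 1367 * (1 - cos θ) ≤ 1000 * θ := by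
  have h := sin_sq_le_linear (u := θ / 2) (by positivity)
  rw [← mul_div_cancel₀ θ two_ne_zero, cos_two_mul_eq_one_sub]
  linarith

theorem linear_le_arccos {z : ℝ} (hz : -1 ≤ z) : 1367 / 1000 * (1 - z) ≤ arccos z := by
  rcases le_or_gt z 1 with hz₁ | hz₁
  · have h := one_sub_cos_le_linear (arccos_nonneg z)
    rw [cos_arccos hz hz₁] at h
    linarith
  · nlinarith [arccos_nonneg z]

end Real

theorem arccos_lower_bound
    (α : ℝ)
    (hα : α = sInf ((fun z : ℝ => (2 / Real.pi) * Real.arccos z / (1 - z)) ''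
      Set.Ico (-1 : ℝ) 1)) :
    (∀ t ∈ Set.Ico (-1 : ℝ) 1, α * (1 - t) ≤ (2 / Real.pi) * Real.arccos t) ∧
      0.87 < α := by
  set f : ℝ → ℝ := fun z ↦ 2 / π * arccos z / (1 - z)
  have hf_ge : ∀ z ∈ Ico (-1 : ℝ) 1, 2 / π * (1367 / 1000) ≤ f z := by
    rintro z ⟨hz₀, hz₁⟩
    rw [le_div_iff₀ (sub_pos.2 hz₁), mul_assoc]
    exact mul_le_mul_of_nonneg_left (linear_le_arccos hz₀) (by positivity)
  have hbdd : BddBelow (f '' Ico (-1) 1) := ⟨_, forall_mem_image.2 hf_ge⟩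
  constructor
  · intro t ht
    have h := mul_le_mul_of_nonneg_right (hα ▸ csInf_le hbdd (mem_image_of_mem f ht))
      (sub_nonneg.2 ht.2.le)
    rwa [div_mul_cancel₀ _ (sub_pos.2 ht.2).ne'] at h
  · have hα_ge : 2 / π * (1367 / 1000) ≤ α :=
      hα ▸ le_csInf ((nonempty_Ico.2 (by norm_num)).image f) (forall_mem_image.2 hf_ge)
    have h87 : (0.87 : ℝ) < 2 / π * (1367 / 1000) := by
      rw [div_mul_eq_mul_div, lt_div_iff₀ pi_pos]
      linarith [pi_lt_d4]
    linarith
end
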